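/- Let (α_n, β_n) be a Bailey pair relative to a, i.e., β_n = Σ_{k=0}^n α_k / ((q;q)_{n-k} (aq;q)_{n+k}) for all n ≥ 0. Define α'_n = (ρ1;q)_n (ρ2;q)_n (aq/(ρ1ρ2))^n α_n / ((aq/ρ1;q)_n (aq/ρ2;q)_n) and β'_n = Σ_{k=0}^n (ρ1;q)_k (ρ2;q)_k (aq/(ρ1ρ2);q)_{n-k} (aq/(ρ1ρ2))^k β_k / ((aq/ρ1;q)_n (aq/ρ2;q)_n (q;q)_{n-k}). Then (α'_n, β'_n) is also a Bailey pair relative to a. -/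

import Mathlib

set_option maxHeartbeats 2000000

open scoped BigOperators

noncomputable def qPoch (a q : ℂ) (n : ℕ) : ℂ := ∏ i ∈ Finset.range n, (1 - a * q ^ i)

noncomputable def qPochInf (a q : ℂ) : ℂ := ∏' i : ℕ, (1 - a * q ^ i)

lemma qPoch_succ (a q : ℂ) (n : ℕ) : qPoch a q (n+1) = qPoch a q n * (1 - a * q ^ n) :=
  Finset.prod_range_succ _ n

lemma qPoch_add (a q : ℂ) (m n : ℕ) :
    qPoch a q (m + n) = qPoch a q m * qPoch (a * q ^ m) q n := by
  unfold qPoch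
  rw [Finset.prod_range_add]
  congr 1
  refine Finset.prod_congr rfl fun i _ => ?_
  rw [pow_add]; ring

lemma one_sub_ne {a q : ℂ} {n : ℕ} (h : qPoch a q (n+1) ≠ 0) : (1 : ℂ) - a * q ^ n ≠ 0 :=
  right_ne_zero_of_mul (by rwa [← qPoch_succ])

lemma sum_triangle {M : Type*} [AddCommMonoid M] (f : ℕ → ℕ → M) (n : ℕ) :
    ∑ k ∈ Finset.range (n+1), ∑ j ∈ Finset.range (k+1), f k j
      = ∑ j ∈ Finset.range (n+1), ∑ k ∈ Finset.Ico j (n+1), f k j := by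
  induction n with
  | zero => simp
  | succ n ih =>
    rw [Finset.sum_range_succ, ih, Finset.sum_range_succ
      (fun j => ∑ k ∈ Finset.Ico j (n+1+1), f k j)]
    have h1 : ∀ j ∈ Finset.range (n+1), ∑ k ∈ Finset.Ico j (n+1+1), f k j
        = ∑ k ∈ Finset.Ico j (n+1), f k j + f (n+1) j := by
      intro j hj
      have := Finset.mem_range.mp hj
      rw [Finset.sum_Ico_succ_top (by omega : j ≤ n+1)]
    rw [Finset.sum_congr rfl h1, Finset.sum_add_distrib]
    have h2 : ∑ k ∈ Finset.Ico (n+1) (n+1+1), f k (n+1) = f (n+1) (n+1) := by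
      simp
    rw [h2, Finset.sum_range_succ (fun j => f (n+1) j)]
    abel

lemma cert_aux (q A B Z x y zi pa pb pz qi qj pc : ℂ)
    (hqi : qi ≠ 0) (hqj : qj ≠ 0) (hpc : pc ≠ 0)
    (h1 : (1:ℂ) - q * x ≠ 0) (h2 : (1:ℂ) - q * y ≠ 0) (h3 : (1:ℂ) - Z * A * B * x ≠ 0) :
    (1 - x * y * q) * (1 - Z * A * B * (x * y)) *
        (pa * pb * (pz * (1 - Z * y)) * zi / (qi * (qj * (1 - q * y)) * pc))
      = (1 - Z * B * (x * y)) * (1 - Z * A * (x * y)) * (pa * pb * pz * zi / (qi * qj * pc))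
        + ((1 - q * x) * (Z * A * B * (x * y) - y) *
            ((pa * (1 - A * x)) * (pb * (1 - B * x)) * pz * (zi * Z) /
              ((qi * (1 - q * x)) * qj * (pc * (1 - Z * A * B * x))))
          - (1 - x) * (Z * A * B * (x * y) - y * q) *
            (pa * pb * (pz * (1 - Z * y)) * zi / (qi * (qj * (1 - q * y)) * pc))) := by
  have hD : qi * qj * pc * (1 - q * x) * (1 - q * y) * (1 - Z * A * B * x) ≠ 0 := by
    exact mul_ne_zero (mul_ne_zero (mul_ne_zero (mul_ne_zero (mul_ne_zero hqi hqj) hpc) h1) h2) h3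
  set D := qi * qj * pc * (1 - q * x) * (1 - q * y) * (1 - Z * A * B * x) with hDdef
  have t1 : pa * pb * (pz * (1 - Z * y)) * zi / (qi * (qj * (1 - q * y)) * pc)
      = (pa * pb * pz * (1 - Z * y) * zi * ((1 - q * x) * (1 - Z * A * B * x))) / D := by
    rw [div_eq_div_iff (by exact mul_ne_zero (mul_ne_zero hqi (mul_ne_zero hqj h2)) hpc) hD, hDdef]
    ring
  have t2 : pa * pb * pz * zi / (qi * qj * pc)
      = (pa * pb * pz * zi * ((1 - q * x) * (1 - q * y) * (1 - Z * A * B * x))) / D := by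
    rw [div_eq_div_iff (by exact mul_ne_zero (mul_ne_zero hqi hqj) hpc) hD, hDdef]
    ring
  have t3 : (pa * (1 - A * x)) * (pb * (1 - B * x)) * pz * (zi * Z) /
        ((qi * (1 - q * x)) * qj * (pc * (1 - Z * A * B * x)))
      = (pa * (1 - A * x) * (pb * (1 - B * x)) * pz * zi * Z * (1 - q * y)) / D := by
    rw [div_eq_div_iff (by
      exact mul_ne_zero (mul_ne_zero (mul_ne_zero hqi h1) hqj) (mul_ne_zero hpc h3)) hD, hDdef]
    ring
  rw [t1, t2, t3]
  clear hDdef t1 t2 t3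
  clear_value D
  field_simp
  ring

noncomputable def bT (q A B Z : ℂ) (m i : ℕ) : ℂ :=
  qPoch A q i * qPoch B q i * qPoch Z q (m - i) * Z ^ i /
    (qPoch q q i * qPoch q q (m - i) * qPoch (Z * A * B) q i)

noncomputable def bG (q A B Z : ℂ) (m i : ℕ) : ℂ :=
  (1 - q ^ i) * (Z * A * B * q ^ m - q ^ (m + 1 - i)) * bT q A B Z (m + 1) i

lemma cert (q A B Z : ℂ) (i j : ℕ)
    (hQi : qPoch q q i ≠ 0) (hQj : qPoch q q j ≠ 0)
    (hPc : qPoch (Z * A * B) q i ≠ 0)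
    (hqi : (1 : ℂ) - q * q ^ i ≠ 0) (hqj : (1 : ℂ) - q * q ^ j ≠ 0)
    (hci : (1 : ℂ) - Z * A * B * q ^ i ≠ 0) :
    (1 - q ^ (i + j + 1)) * (1 - Z * A * B * q ^ (i + j)) * bT q A B Z (i + j + 1) i
      = (1 - Z * B * q ^ (i + j)) * (1 - Z * A * q ^ (i + j)) * bT q A B Z (i + j) i
        + (bG q A B Z (i + j) (i + 1) - bG q A B Z (i + j) i) := by
  have e1 : i + j - i = j := by omega
  have e2 : i + j + 1 - i = j + 1 := by omega
  have e3 : i + j + 1 - (i + 1) = j := by omega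
  unfold bG bT
  rw [e1, e2, e3,
    qPoch_succ Z q j, qPoch_succ q q j, qPoch_succ A q i, qPoch_succ B q i,
    qPoch_succ q q i, qPoch_succ (Z*A*B) q i,
    show q ^ (i+j+1) = q^i * q^j * q by rw [pow_succ, pow_add],
    show q ^ (i+j) = q^i * q^j from pow_add q i j,
    show q ^ (j+1) = q^j * q from pow_succ q j,
    show q ^ (i+1) = q^i * q from pow_succ q i,
    show Z ^ (i+1) = Z^i * Z from pow_succ Z i]
  linear_combination cert_aux q A B Z (q^i) (q^j) (Z^i) (qPoch A q i) (qPoch B q i)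
    (qPoch Z q j) (qPoch q q i) (qPoch q q j) (qPoch (Z*A*B) q i) hQi hQj hPc hqi hqj hci

lemma saal (q A B Z : ℂ) (hq : ∀ n, qPoch q q n ≠ 0) (hC : ∀ n, qPoch (Z * A * B) q n ≠ 0)
    (m : ℕ) :
    ∑ i ∈ Finset.range (m+1), bT q A B Z m i
      = qPoch (Z * B) q m * qPoch (Z * A) q m / (qPoch q q m * qPoch (Z * A * B) q m) := by
  induction m with
  | zero => simp [bT, qPoch]
  | succ m ih =>
    have n3 : (1:ℂ) - q * q ^ m ≠ 0 := one_sub_ne (hq (m+1))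
    have n4 : (1:ℂ) - Z * A * B * q ^ m ≠ 0 := one_sub_ne (hC (m+1))
    have n5 : (1:ℂ) - q ^ (m+1) ≠ 0 := by
      rw [pow_succ]
      simpa [mul_comm] using n3
    have hp : ((1:ℂ) - q ^ (m+1)) * (1 - Z * A * B * q ^ m) ≠ 0 := mul_ne_zero n5 n4
    have key : ∀ i ∈ Finset.range (m+1),
        (1 - q ^ (m+1)) * (1 - Z * A * B * q ^ m) * bT q A B Z (m+1) i
          = (1 - Z * B * q ^ m) * (1 - Z * A * q ^ m) * bT q A B Z m i
            + (bG q A B Z m (i+1) - bG q A B Z m i) := by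
      intro i hi
      have hi' := Finset.mem_range.mp hi
      obtain ⟨j, rfl⟩ : ∃ j, m = i + j := ⟨m - i, by omega⟩
      exact cert q A B Z i j (hq i) (hq j) (hC i)
        (one_sub_ne (hq (i+1))) (one_sub_ne (hq (j+1))) (one_sub_ne (hC (i+1)))
    have hG0 : bG q A B Z m 0 = 0 := by simp [bG]
    have hGtop : bG q A B Z m (m+1)
        = -((1 - q ^ (m+1)) * (1 - Z * A * B * q ^ m) * bT q A B Z (m+1) (m+1)) := by
      unfold bG
      rw [show m + 1 - (m+1) = 0 by omega, pow_zero]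
      ring
    have hsum : (1 - q ^ (m+1)) * (1 - Z * A * B * q ^ m)
          * ∑ i ∈ Finset.range (m+2), bT q A B Z (m+1) i
        = (1 - Z * B * q ^ m) * (1 - Z * A * q ^ m)
          * ∑ i ∈ Finset.range (m+1), bT q A B Z m i := by
      rw [Finset.sum_range_succ, mul_add, Finset.mul_sum, Finset.mul_sum,
        Finset.sum_congr rfl key, Finset.sum_add_distrib,
        Finset.sum_range_sub (fun i => bG q A B Z m i), hG0, hGtop]
      ring
    have h2 : ∑ i ∈ Finset.range (m+2), bT q A B Z (m+1) i
        = (1 - Z * B * q ^ m) * (1 - Z * A * q ^ m)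
            * (∑ i ∈ Finset.range (m+1), bT q A B Z m i)
            / ((1 - q ^ (m+1)) * (1 - Z * A * B * q ^ m)) := by
      rw [eq_div_iff hp]
      linear_combination hsum
    rw [h2, ih, qPoch_succ (Z*B) q m, qPoch_succ (Z*A) q m, qPoch_succ q q m,
      qPoch_succ (Z*A*B) q m]
    have n1 : qPoch q q m ≠ 0 := hq m
    have n2 : qPoch (Z*A*B) q m ≠ 0 := hC m
    have n3' : (1:ℂ) - q ^ m * q ≠ 0 := by rwa [mul_comm]
    field_simp
    ring

theorem stmt_10 (q a ρ₁ ρ₂ : ℂ) (hρ₁ : ρ₁ ≠ 0) (hρ₂ : ρ₂ ≠ 0)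
    (hq : ∀ n, qPoch q q n ≠ 0) (haq : ∀ n, qPoch (a * q) q n ≠ 0)
    (h1 : ∀ n, qPoch (a * q / ρ₁) q n ≠ 0) (h2 : ∀ n, qPoch (a * q / ρ₂) q n ≠ 0)
    (α β : ℕ → ℂ)
    (hpair : ∀ n, β n = ∑ k ∈ Finset.range (n + 1),
      α k / (qPoch q q (n - k) * qPoch (a * q) q (n + k))) :
    ∀ n, (∑ k ∈ Finset.range (n + 1),
        qPoch ρ₁ q k * qPoch ρ₂ q k * qPoch (a * q / (ρ₁ * ρ₂)) q (n - k) *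
          (a * q / (ρ₁ * ρ₂)) ^ k * β k /
          (qPoch (a * q / ρ₁) q n * qPoch (a * q / ρ₂) q n * qPoch q q (n - k))) =
      ∑ k ∈ Finset.range (n + 1),
        (qPoch ρ₁ q k * qPoch ρ₂ q k * (a * q / (ρ₁ * ρ₂)) ^ k * α k /
            (qPoch (a * q / ρ₁) q k * qPoch (a * q / ρ₂) q k)) /
          (qPoch q q (n - k) * qPoch (a * q) q (n + k)) := by
  intro n
  set Z : ℂ := a * q / (ρ₁ * ρ₂) with hZ
  calc
    ∑ k ∈ Finset.range (n + 1),
        qPoch ρ₁ q k * qPoch ρ₂ q k * qPoch Z q (n - k) * Z ^ k * β k /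
          (qPoch (a * q / ρ₁) q n * qPoch (a * q / ρ₂) q n * qPoch q q (n - k))
      = ∑ k ∈ Finset.range (n + 1), ∑ j ∈ Finset.range (k + 1),
          qPoch ρ₁ q k * qPoch ρ₂ q k * qPoch Z q (n - k) * Z ^ k *
            (α j / (qPoch q q (k - j) * qPoch (a * q) q (k + j))) /
            (qPoch (a * q / ρ₁) q n * qPoch (a * q / ρ₂) q n * qPoch q q (n - k)) := by
        refine Finset.sum_congr rfl fun k _ => ?_
        rw [hpair k, Finset.mul_sum, Finset.sum_div]
    _ = ∑ j ∈ Finset.range (n + 1), ∑ k ∈ Finset.Ico j (n + 1),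
          qPoch ρ₁ q k * qPoch ρ₂ q k * qPoch Z q (n - k) * Z ^ k *
            (α j / (qPoch q q (k - j) * qPoch (a * q) q (k + j))) /
            (qPoch (a * q / ρ₁) q n * qPoch (a * q / ρ₂) q n * qPoch q q (n - k)) :=
        sum_triangle _ n
    _ = ∑ j ∈ Finset.range (n + 1),
          (qPoch ρ₁ q j * qPoch ρ₂ q j * Z ^ j * α j /
              (qPoch (a * q / ρ₁) q j * qPoch (a * q / ρ₂) q j)) /
            (qPoch q q (n - j) * qPoch (a * q) q (n + j)) := by
        refine Finset.sum_congr rfl fun j hj => ?_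
        have hjn := Finset.mem_range.mp hj
        obtain ⟨m, rfl⟩ : ∃ m, n = j + m := ⟨n - j, by omega⟩
        -- abbreviations
        set A : ℂ := ρ₁ * q ^ j with hA
        set B : ℂ := ρ₂ * q ^ j with hB
        have harg : a * q * q ^ (2 * j) = Z * A * B := by
          rw [hZ, hA, hB, two_mul, pow_add]
          field_simp
        have hzb : Z * B = a * q / ρ₁ * q ^ j := by
          rw [hZ, hB]; field_simp
        have hza : Z * A = a * q / ρ₂ * q ^ j := by
          rw [hZ, hA]; field_simp
        have hC : ∀ N, qPoch (Z * A * B) q N ≠ 0 := by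
          intro N
          rw [← harg]
          exact right_ne_zero_of_mul (a := qPoch (a*q) q (2*j))
            (by rw [← qPoch_add]; exact haq (2*j + N))
        have hZBm : ∀ N, qPoch (Z * B) q N ≠ 0 := by
          intro N
          rw [hzb]
          exact right_ne_zero_of_mul (a := qPoch (a*q/ρ₁) q j)
            (by rw [← qPoch_add]; exact h1 (j + N))
        have hZAm : ∀ N, qPoch (Z * A) q N ≠ 0 := by
          intro N
          rw [hza]
          exact right_ne_zero_of_mul (a := qPoch (a*q/ρ₂) q j)
            (by rw [← qPoch_add]; exact h2 (j + N))
        have per : ∀ i ∈ Finset.range (m + 1),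
            qPoch ρ₁ q (j+i) * qPoch ρ₂ q (j+i) * qPoch Z q (j + m - (j+i)) * Z ^ (j+i) *
              (α j / (qPoch q q ((j+i) - j) * qPoch (a * q) q ((j+i) + j))) /
              (qPoch (a * q / ρ₁) q (j+m) * qPoch (a * q / ρ₂) q (j+m) * qPoch q q (j + m - (j+i)))
            = (qPoch ρ₁ q j * qPoch ρ₂ q j * Z ^ j * α j /
                (qPoch (a * q / ρ₁) q (j+m) * qPoch (a * q / ρ₂) q (j+m) * qPoch (a*q) q (2*j)))
              * bT q A B Z m i := by
          intro i hi
          have him := Finset.mem_range.mp hi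
          have i1 : j + m - (j + i) = m - i := by omega
          have i2 : j + i - j = i := by omega
          have i3 : (j + i) + j = 2*j + i := by omega
          rw [i1, i2, i3, qPoch_add ρ₁ q j i, qPoch_add ρ₂ q j i, qPoch_add (a*q) q (2*j) i,
            pow_add Z j i, harg, ← hA, ← hB]
          unfold bT
          ring
        rw [Finset.sum_Ico_eq_sum_range,
          show j + m + 1 - j = m + 1 by omega,
          Finset.sum_congr rfl per, ← Finset.mul_sum, saal q A B Z hq hC m]
        -- final reassembly
        have d1 : qPoch (a * q / ρ₁) q (j + m) = qPoch (a * q / ρ₁) q j * qPoch (Z * B) q m := by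
          rw [qPoch_add, hzb]
        have d2 : qPoch (a * q / ρ₂) q (j + m) = qPoch (a * q / ρ₂) q j * qPoch (Z * A) q m := by
          rw [qPoch_add, hza]
        have d3 : qPoch (a * q) q (j + m + j) = qPoch (a*q) q (2*j) * qPoch (Z * A * B) q m := by
          rw [show j + m + j = 2*j + m by omega, qPoch_add, harg]
        have i4 : j + m - j = m := by omega
        rw [d1, d2, d3, i4]
        have n1 : qPoch (a * q / ρ₁) q j ≠ 0 := h1 j
        have n2 : qPoch (a * q / ρ₂) q j ≠ 0 := h2 j
        have n3 : qPoch (Z * B) q m ≠ 0 := hZBm m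
        have n4 : qPoch (Z * A) q m ≠ 0 := hZAm m
        have n5 : qPoch q q m ≠ 0 := hq m
        have n6 : qPoch (Z * A * B) q m ≠ 0 := hC m
        have n7 : qPoch (a * q) q (2*j) ≠ 0 := haq (2*j)
        rw [div_mul_div_comm, div_div,
          div_eq_div_iff (by apply_rules [mul_ne_zero]) (by apply_rules [mul_ne_zero])]
        ring
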